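/- arXiv:math/0008062 — 6 statements merged into one kernel-verified Lean document; each statement's English description precedes it below -/
import Mathlib

section
/- For every complex number α, the following identity of formal series in the variables z0, z1, z2 holds: z0^{-1}·((z1−z2)/z0)^{α}·δ((z1−z2)/z0) = z1^{-1}·((z0+z2)/z1)^{−α}·δ((z0+z2)/z1), where the left-hand side is Σ_{n∈ℤ} z0^{−n−α−1}(z1−z2)^{n+α} with each (z1−z2)^{n+α} expanded in nonnegative integer powers of z2, and the right-hand side is Σ_{m∈ℤ} z1^{α−m−1}(z0+z2)^{m−α} with each (z0+z2)^{m−α} expanded in nonnegative integer powers of z2. Equivalently, comparing coefficients: for all n ∈ ℤ and i ∈ ℕ, (−1)^i·binom(n+α, i) = binom(i−n−1−α, i). -/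
/-- The generalized binomial coefficient `binom(γ, i) = γ(γ−1)⋯(γ−i+1)/i!` for `γ : ℂ`, `i : ℕ`. -/
noncomputable def cchoose (γ : ℂ) (i : ℕ) : ℂ :=
  (∏ j ∈ Finset.range i, (γ - (j : ℂ))) / (i.factorial : ℂ)

/-- The formal-series identity
`z0⁻¹ ((z1−z2)/z0)^α δ((z1−z2)/z0) = z1⁻¹ ((z0+z2)/z1)^{−α} δ((z0+z2)/z1)`,
with the indicated expansions in nonnegative integer powers of `z2`, stated in its
equivalent coefficientwise form: for all `α : ℂ`, `n : ℤ` and `i : ℕ`,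
`(−1)^i · binom(n+α, i) = binom(i−n−1−α, i)`. -/
theorem delta_identity_coefficients (α : ℂ) (n : ℤ) (i : ℕ) :
    (-1 : ℂ) ^ i * cchoose ((n : ℂ) + α) i = cchoose ((i : ℂ) - (n : ℂ) - 1 - α) i := by
  unfold cchoose
  rw [← mul_div_assoc]
  congr 1
  set x : ℂ := (n : ℂ) + α with hx
  calc (-1 : ℂ) ^ i * ∏ j ∈ Finset.range i, (x - (j : ℂ))
      = ∏ j ∈ Finset.range i, ((j : ℂ) - x) := by
        have h1 : (-1 : ℂ) ^ i = ∏ _j ∈ Finset.range i, (-1 : ℂ) := by simp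
        rw [h1, ← Finset.prod_mul_distrib]
        exact Finset.prod_congr rfl (fun j _ => by ring)
    _ = ∏ j ∈ Finset.range i, (((i - 1 - j : ℕ) : ℂ) - x) :=
        (Finset.prod_range_reflect (fun j => ((j : ℂ) - x)) i).symm
    _ = ∏ j ∈ Finset.range i, ((i : ℂ) - (n : ℂ) - 1 - α - (j : ℂ)) := by
        refine Finset.prod_congr rfl (fun j hj => ?_)
        have hj' : j < i := Finset.mem_range.mp hj
        have : ((i - 1 - j : ℕ) : ℂ) = (i : ℂ) - 1 - (j : ℂ) := by
          push_cast [Nat.cast_sub (by omega : j ≤ i - 1), Nat.cast_sub (by omega : 1 ≤ i)]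
          ring
        rw [this, hx]; ring
end

section
/- For all integers r, s, k and every formal power series p(z1, z2) ∈ ℂ[[z1, z2]], the following identity of formal series in z0, z1, z2 (with integer exponents) holds: z0^{-1}δ((z1−z2)/z0)·z1^{r} z2^{s} (z1−z2)^{k} p(z1,z2) − z0^{-1}δ((z2−z1)/(−z0))·z1^{r} z2^{s} (−z2+z1)^{k} p(z1,z2) = z2^{-1}δ((z1−z0)/z2)·(z2+z0)^{r} z2^{s} z0^{k} p(z2+z0, z2). Here (z1−z2)^{k} and the expansion of δ((z1−z2)/z0) are taken in nonnegative integer powers of z2; (−z2+z1)^{k} and the expansion of δ((z2−z1)/(−z0)) are taken in nonnegative integer powers of z1; and (z2+z0)^{r}, p(z2+z0, z2) and the expansion of δ((z1−z0)/z2) are taken in nonnegative integer powers of z0. All three terms are well-defined formal series (each coefficient is a finite sum). -/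
/-- Summand family for the coefficient of `z0^m0 z1^m1 z2^m2` in
`z0⁻¹ δ((z1−z2)/z0) · z1^r z2^s (z1−z2)^k p(z1,z2)`, where `δ((z1−z2)/z0)` and `(z1−z2)^k`
are expanded in nonnegative integer powers of `z2`.  The index `(i, j, b)` records the
power of `z2` taken from the delta function, from `(z1−z2)^k` and from `p` respectively;
`n = −m0−1` is forced by the `z0`-exponent and the `z1`-exponent `a` of the term of `p`
is determined by `m1`. -/
noncomputable def termAfun (r s k : ℤ) (p : ℕ → ℕ → ℂ) (m0 m1 m2 : ℤ) :
    ℕ × ℕ × ℕ → ℂ := fun x =>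
  let i := x.1; let j := x.2.1; let b := x.2.2
  let n : ℤ := -m0 - 1
  let a : ℤ := m1 - (n - i + r + k - j)
  if ((i : ℤ) + j + b = m2 - s ∧ 0 ≤ a) then
    cchoose (n : ℂ) i * (-1) ^ i * cchoose (k : ℂ) j * (-1) ^ j * p a.toNat b
  else 0

/-- Coefficient of `z0^m0 z1^m1 z2^m2` in
`z0⁻¹ δ((z1−z2)/z0) · z1^r z2^s (z1−z2)^k p(z1,z2)`. -/
noncomputable def termA (r s k : ℤ) (p : ℕ → ℕ → ℂ) (m0 m1 m2 : ℤ) : ℂ :=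
  ∑' x : ℕ × ℕ × ℕ, termAfun r s k p m0 m1 m2 x

/-- Summand family for the coefficient of `z0^m0 z1^m1 z2^m2` in
`z0⁻¹ δ((z2−z1)/(−z0)) · z1^r z2^s (−z2+z1)^k p(z1,z2)`, where `δ((z2−z1)/(−z0))` and
`(−z2+z1)^k` are expanded in nonnegative integer powers of `z1`.  The index `(i, j, a)`
records the power of `z1` taken from the delta function, from `(−z2+z1)^k` and from `p`
respectively; `n = −m0−1` is forced by the `z0`-exponent and the `z2`-exponent `b` of the
term of `p` is determined by `m2`. -/
noncomputable def termBfun (r s k : ℤ) (p : ℕ → ℕ → ℂ) (m0 m1 m2 : ℤ) :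
    ℕ × ℕ × ℕ → ℂ := fun x =>
  let i := x.1; let j := x.2.1; let a := x.2.2
  let n : ℤ := -m0 - 1
  let b : ℤ := m2 - (n - i + s + k - j)
  if ((i : ℤ) + j + a = m1 - r ∧ 0 ≤ b) then
    (-1 : ℂ) ^ n * cchoose (n : ℂ) i * (-1) ^ i * cchoose (k : ℂ) j * (-1 : ℂ) ^ (k - j)
      * p a b.toNat
  else 0

/-- Coefficient of `z0^m0 z1^m1 z2^m2` in
`z0⁻¹ δ((z2−z1)/(−z0)) · z1^r z2^s (−z2+z1)^k p(z1,z2)`. -/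
noncomputable def termB (r s k : ℤ) (p : ℕ → ℕ → ℂ) (m0 m1 m2 : ℤ) : ℂ :=
  ∑' x : ℕ × ℕ × ℕ, termBfun r s k p m0 m1 m2 x

/-- Summand family for the coefficient of `z0^m0 z1^m1 z2^m2` in
`z2⁻¹ δ((z1−z0)/z2) · (z2+z0)^r z2^s z0^k p(z2+z0, z2)`, where `δ((z1−z0)/z2)`,
`(z2+z0)^r` and `p(z2+z0,z2)` are expanded in nonnegative integer powers of `z0`.
The index `(i, j, c, b)` records the power of `z0` taken from the delta function,
from `(z2+z0)^r` and from the expansion of `(z2+z0)^a` inside `p(z2+z0,z2)` (whose term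
`p(a,b) (z2+z0)^a z2^b` contributes `binom(a,c) z2^{a-c} z0^c z2^b`); `n = m1 + i` is
forced by the `z1`-exponent and `a` is determined by the `z2`-exponent `m2`. -/
noncomputable def termCfun (r s k : ℤ) (p : ℕ → ℕ → ℂ) (m0 m1 m2 : ℤ) :
    ℕ × ℕ × ℕ × ℕ → ℂ := fun x =>
  let i := x.1; let j := x.2.1; let c := x.2.2.1; let b := x.2.2.2
  let n : ℤ := m1 + i
  let a : ℤ := m2 - (-1 - n + r - j + s - c + b)
  if ((i : ℤ) + j + c = m0 - k ∧ 0 ≤ a ∧ (c : ℤ) ≤ a) then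
    cchoose (n : ℂ) i * (-1) ^ i * cchoose (r : ℂ) j * (a.toNat.choose c : ℂ) * p a.toNat b
  else 0

/-- Coefficient of `z0^m0 z1^m1 z2^m2` in
`z2⁻¹ δ((z1−z0)/z2) · (z2+z0)^r z2^s z0^k p(z2+z0, z2)`. -/
noncomputable def termC (r s k : ℤ) (p : ℕ → ℕ → ℂ) (m0 m1 m2 : ℤ) : ℂ :=
  ∑' x : ℕ × ℕ × ℕ × ℕ, termCfun r s k p m0 m1 m2 x

/-!
Fix the coefficient of `z0^m0 z1^m1 z2^m2`. In every term the sums over the binomial indices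
collapse by Chu–Vandermonde, leaving a sum over the coefficients `p(a, b)` with
`a + b = t := m0 + m1 + m2 + 1 - r - s - k` (no term survives when `t < 0`). With
`N = m0 - k`, `ν = -N - 1` and `M = m2 - s - b`, the factor of `p(t - b, b)` in the first two
terms is the coefficient of `x^(ν - M) y^M` in `(x - y)^ν` expanded in powers of `y`, resp. of
`x`, and in the third term it is `binom(M + N, N)` (upper negation turns
`(-1)^i binom(m1 + i, i)` into `binom(-1 - m1, i)`). So everything reduces to the
one-variable identity: the two expansions of `(x - y)^ν` agree for `ν ≥ 0` by the symmetry of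
binomial coefficients, and for `ν = -N - 1 < 0` they differ by `binom(M + N, N)` by upper
negation.
-/

open Finset

theorem descPochhammer_smeval_eq_prod_range {R : Type*} [CommRing R] (r : R) (n : ℕ) :
    (descPochhammer ℤ n).smeval r = ∏ j ∈ range n, (r - j) := by
  rw [← descPochhammer_eval_eq_prod_range, ← descPochhammer_map (Int.castRingHom R),
    Polynomial.eval_map, Polynomial.eval₂_eq_sum, Polynomial.smeval_eq_sum]
  simp [Polynomial.sum, Polynomial.smul_pow, zsmul_eq_mul]

section Binomial

variable {R : Type*} [CommRing R] [BinomialRing R]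

theorem choose_neg_eq_neg_one_pow_mul (r : R) (n : ℕ) :
    Ring.choose (-r) n = (-1) ^ n * Ring.choose (r + n - 1) n := by
  rw [Ring.choose_neg, Units.smul_def, Int.coe_negOnePow_natCast, zsmul_eq_mul]
  push_cast
  ring

theorem choose_neg_natCast_sub_one (n m : ℕ) :
    Ring.choose (-(n : R) - 1) m = (-1) ^ m * (n + m).choose m := by
  rw [← neg_add', choose_neg_eq_neg_one_pow_mul, add_right_comm, add_sub_cancel_right,
    ← Nat.cast_add, Ring.choose_natCast]

theorem sum_antidiagonal_neg_one_pow_mul_choose (r s : R) (n : ℕ) :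
    ∑ ij ∈ antidiagonal n, (-1) ^ ij.1 * Ring.choose r ij.1 * ((-1) ^ ij.2 * Ring.choose s ij.2) =
      (-1) ^ n * Ring.choose (r + s) n := by
  rw [Ring.add_choose_eq n (Commute.all r s), mul_sum]
  refine sum_congr rfl fun ij hij => ?_
  rw [← mem_antidiagonal.mp hij, pow_add]
  ring

theorem sum_range_choose_mul_choose (r s : R) (n : ℕ) :
    ∑ i ∈ range (n + 1), Ring.choose r i * Ring.choose s (n - i) = Ring.choose (r + s) n := by
  rw [Ring.add_choose_eq n (Commute.all r s), Nat.sum_antidiagonal_eq_sum_range_succ_mk]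

end Binomial

theorem cchoose_eq_choose (x : ℂ) (i : ℕ) : cchoose x i = Ring.choose x i := by
  rw [Ring.choose_eq_smul, smul_eq_mul, descPochhammer_smeval_eq_prod_range, cchoose,
    div_eq_inv_mul]

/-- The coefficient of `x ^ (ν - M) * y ^ M` in `(x - y) ^ ν` expanded in nonnegative powers
of `y`. -/
noncomputable def subPowCoeff (ν M : ℤ) : ℂ :=
  if 0 ≤ M then (-1) ^ M.toNat * Ring.choose (ν : ℂ) M.toNat else 0

theorem subPowCoeff_of_neg (ν : ℤ) {M : ℤ} (hM : M < 0) : subPowCoeff ν M = 0 :=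
  if_neg hM.not_ge

theorem subPowCoeff_natCast (ν : ℤ) (m : ℕ) :
    subPowCoeff ν m = (-1) ^ m * Ring.choose (ν : ℂ) m := by
  simp [subPowCoeff]

theorem subPowCoeff_natCast_natCast_of_lt {n m : ℕ} (h : n < m) : subPowCoeff n m = 0 := by
  rw [subPowCoeff_natCast, Int.cast_natCast, Ring.choose_natCast, Nat.choose_eq_zero_of_lt h,
    Nat.cast_zero, mul_zero]

theorem subPowCoeff_natCast_symm (n : ℕ) (M : ℤ) :
    subPowCoeff n M = (-1) ^ (n : ℤ) * subPowCoeff n (n - M) := by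
  rcases lt_or_ge M 0 with hM | hM
  · obtain ⟨l, hl⟩ : ∃ l : ℕ, (n : ℤ) - M = l := ⟨(n - M).toNat, by omega⟩
    rw [subPowCoeff_of_neg _ hM, hl, subPowCoeff_natCast_natCast_of_lt (by omega), mul_zero]
  obtain ⟨m, rfl⟩ := Int.eq_ofNat_of_zero_le hM
  rcases le_or_gt m n with hmn | hmn
  · rw [← Nat.cast_sub hmn, subPowCoeff_natCast, subPowCoeff_natCast, Int.cast_natCast,
      Ring.choose_natCast, Ring.choose_natCast, Nat.choose_symm hmn, zpow_natCast, ← mul_assoc,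
      ← pow_add, show n + (n - m) = m + 2 * (n - m) by omega, pow_add, pow_mul]
    norm_num
  · rw [subPowCoeff_natCast_natCast_of_lt hmn, subPowCoeff_of_neg _ (by omega), mul_zero]

theorem subPowCoeff_neg_natCast_sub_one (N m : ℕ) :
    subPowCoeff (-N - 1) m = (N + m).choose m := by
  rw [subPowCoeff_natCast, Int.cast_sub, Int.cast_neg, Int.cast_natCast, Int.cast_one,
    choose_neg_natCast_sub_one, ← mul_assoc, ← mul_pow]
  norm_num

/-- `(-1) ^ ν * subPowCoeff ν (ν - M)` is the coefficient of `x ^ (ν - M) * y ^ M` in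
`(-y + x) ^ ν` expanded in nonnegative powers of `x`. -/
theorem subPowCoeff_sub_neg_one_zpow_mul_subPowCoeff (N M : ℤ) :
    subPowCoeff (-N - 1) M - (-1) ^ (-N - 1) * subPowCoeff (-N - 1) (-N - 1 - M) =
      if 0 ≤ N then Ring.choose ((M + N : ℤ) : ℂ) N.toNat else 0 := by
  rcases lt_or_ge N 0 with hN | hN
  · obtain ⟨n, hn⟩ : ∃ n : ℕ, -N - 1 = n := ⟨(-N - 1).toNat, by omega⟩
    rw [if_neg hN.not_ge, hn, sub_eq_zero]
    exact subPowCoeff_natCast_symm n M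
  obtain ⟨N, rfl⟩ := Int.eq_ofNat_of_zero_le hN
  rw [if_pos hN, Int.toNat_natCast]
  rcases le_or_gt 0 M with hM | hM
  · obtain ⟨m, rfl⟩ := Int.eq_ofNat_of_zero_le hM
    rw [subPowCoeff_of_neg _ (by omega : -(N : ℤ) - 1 - m < 0), mul_zero, sub_zero,
      subPowCoeff_neg_natCast_sub_one, ← Nat.cast_add, Int.cast_natCast, Ring.choose_natCast,
      add_comm, Nat.choose_symm_add]
  rw [subPowCoeff_of_neg _ hM, zero_sub]
  rcases le_or_gt 0 (-N - 1 - M) with hL | hL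
  · obtain ⟨l, hl⟩ := Int.eq_ofNat_of_zero_le hL
    rw [hl, subPowCoeff_neg_natCast_sub_one, show M + N = -(l : ℤ) - 1 by omega,
      Int.cast_sub, Int.cast_neg, Int.cast_natCast, Int.cast_one, choose_neg_natCast_sub_one,
      add_comm l, Nat.choose_symm_add, zpow_sub₀ (by norm_num), zpow_neg, zpow_natCast]
    field_simp
    rw [← pow_mul, pow_mul', neg_one_sq, one_pow, one_mul]
  · obtain ⟨c, hc⟩ : ∃ c : ℕ, M + N = c := ⟨(M + N).toNat, by omega⟩
    rw [subPowCoeff_of_neg _ hL, mul_zero, neg_zero, hc, Int.cast_natCast, Ring.choose_natCast,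
      Nat.choose_eq_zero_of_lt (by omega), Nat.cast_zero]

section AntidiagonalFibres

variable {γ : Type*} [DecidableEq γ] {f : ℕ × ℕ × γ → ℂ} {g : ℕ → ℕ → γ → ℂ} {d : γ → ℤ}
  {s : Finset γ}

theorem eq_zero_of_notMem_image_sigma_antidiagonal
    (hf : ∀ i j y, f (i, j, y) = if (i + j : ℤ) = d y ∧ y ∈ s then g i j y else 0) :
    ∀ x ∉ (s.sigma fun y => antidiagonal (d y).toNat).image (fun z => (z.2.1, z.2.2, z.1)),
      f x = 0 := by
  rintro ⟨i, j, y⟩ hx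
  rw [hf]
  refine if_neg fun ⟨hij, hy⟩ => hx (mem_image.mpr ⟨⟨y, i, j⟩, ?_, rfl⟩)
  exact mem_sigma.mpr ⟨hy, HasAntidiagonal.mem_antidiagonal.mpr (by dsimp only; omega)⟩

theorem support_finite_of_eq_ite
    (hf : ∀ i j y, f (i, j, y) = if (i + j : ℤ) = d y ∧ y ∈ s then g i j y else 0) :
    (Function.support f).Finite :=
  (finite_toSet _).subset
    (Function.support_subset_iff'.mpr (eq_zero_of_notMem_image_sigma_antidiagonal hf))

theorem tsum_eq_sum_sum_antidiagonal_of_eq_ite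
    (hf : ∀ i j y, f (i, j, y) = if (i + j : ℤ) = d y ∧ y ∈ s then g i j y else 0) :
    ∑' x, f x =
      ∑ y ∈ s, if 0 ≤ d y then ∑ ij ∈ antidiagonal (d y).toNat, g ij.1 ij.2 y else 0 := by
  rw [tsum_eq_sum (eq_zero_of_notMem_image_sigma_antidiagonal hf), sum_image, sum_sigma]
  · refine sum_congr rfl fun y hy => ?_
    split_ifs with hd
    · refine sum_congr rfl fun ⟨i, j⟩ hij => ?_
      rw [HasAntidiagonal.mem_antidiagonal] at hij
      dsimp only at hij ⊢
      rw [hf, if_pos ⟨by omega, hy⟩]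
    · refine sum_eq_zero fun ⟨i, j⟩ _ => ?_
      dsimp only
      rw [hf, if_neg (by omega)]
  · rintro ⟨y, i, j⟩ - ⟨y', i', j'⟩ - h
    simp only [Prod.mk.injEq] at h
    obtain ⟨rfl, rfl, rfl⟩ := h
    rfl

end AntidiagonalFibres

section Terms

variable {r s k : ℤ} (p : ℕ → ℕ → ℂ) {m0 m1 m2 : ℤ} {t : ℕ}

theorem termAfun_eq_ite (ht : m0 + m1 + m2 + 1 - r - s - k = t) (i j b : ℕ) :
    termAfun r s k p m0 m1 m2 (i, j, b) =
      if (i + j : ℤ) = m2 - s - b ∧ b ∈ range (t + 1) then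
        (-1) ^ i * Ring.choose ((-m0 - 1 : ℤ) : ℂ) i * ((-1) ^ j * Ring.choose (k : ℂ) j)
          * p (t - b) b
      else 0 := by
  simp only [termAfun, cchoose_eq_choose, mem_range]
  split_ifs with h1 h2 h2
  · rw [show (m1 - (-m0 - 1 - i + r + k - j)).toNat = t - b by omega]
    ring
  · exact absurd ⟨by omega, by omega⟩ h2
  · exact absurd ⟨by omega, by omega⟩ h1
  · rfl

theorem termA_eq (ht : m0 + m1 + m2 + 1 - r - s - k = t) :
    termA r s k p m0 m1 m2 =
      ∑ b ∈ range (t + 1), subPowCoeff (k - m0 - 1) (m2 - s - b) * p (t - b) b := by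
  rw [termA, tsum_eq_sum_sum_antidiagonal_of_eq_ite (termAfun_eq_ite p ht)]
  refine sum_congr rfl fun b _ => ?_
  rw [subPowCoeff]
  split_ifs
  · rw [← sum_mul, sum_antidiagonal_neg_one_pow_mul_choose, ← Int.cast_add,
      show -m0 - 1 + k = k - m0 - 1 by ring]
  · rw [zero_mul]

theorem termBfun_eq_ite (ht : m0 + m1 + m2 + 1 - r - s - k = t) (i j a : ℕ) :
    termBfun r s k p m0 m1 m2 (i, j, a) =
      if (i + j : ℤ) = m1 - r - a ∧ a ∈ range (t + 1) then
        (-1) ^ (k - m0 - 1) * ((-1) ^ i * Ring.choose ((-m0 - 1 : ℤ) : ℂ) i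
          * ((-1) ^ j * Ring.choose (k : ℂ) j)) * p a (t - a)
      else 0 := by
  have hsign : (-1 : ℂ) ^ (-m0 - 1) * (-1) ^ (k - j) = (-1) ^ (k - m0 - 1) * (-1) ^ j := by
    rw [← zpow_add₀ (by norm_num), show -m0 - 1 + (k - j) = k - m0 - 1 - j by ring,
      zpow_sub₀ (by norm_num), zpow_natCast, div_eq_mul_inv, ← inv_pow, inv_neg_one]
  simp only [termBfun, cchoose_eq_choose, mem_range]
  split_ifs with h1 h2 h2
  · rw [show (m2 - (-m0 - 1 - i + s + k - j)).toNat = t - a by omega]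
    linear_combination (-1) ^ i * Ring.choose ((-m0 - 1 : ℤ) : ℂ) i * Ring.choose (k : ℂ) j
      * p a (t - a) * hsign
  · exact absurd ⟨by omega, by omega⟩ h2
  · exact absurd ⟨by omega, by omega⟩ h1
  · rfl

theorem termB_eq (ht : m0 + m1 + m2 + 1 - r - s - k = t) :
    termB r s k p m0 m1 m2 =
      ∑ a ∈ range (t + 1),
        (-1) ^ (k - m0 - 1) * subPowCoeff (k - m0 - 1) (m1 - r - a) * p a (t - a) := by
  rw [termB, tsum_eq_sum_sum_antidiagonal_of_eq_ite (termBfun_eq_ite p ht)]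
  refine sum_congr rfl fun a _ => ?_
  rw [subPowCoeff]
  split_ifs
  · rw [← sum_mul, ← mul_sum, sum_antidiagonal_neg_one_pow_mul_choose, ← Int.cast_add,
      show -m0 - 1 + k = k - m0 - 1 by ring]
  · rw [mul_zero, zero_mul]

theorem termCfun_eq_ite (ht : m0 + m1 + m2 + 1 - r - s - k = t) (i j : ℕ) (y : ℕ × ℕ) :
    termCfun r s k p m0 m1 m2 (i, j, y) =
      if (i + j : ℤ) = m0 - k - y.1 ∧ y ∈ range ((m0 - k).toNat + 1) ×ˢ range (t + 1) then
        Ring.choose ((-1 - m1 : ℤ) : ℂ) i * Ring.choose (r : ℂ) j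
          * ((t - y.2).choose y.1 * p (t - y.2) y.2)
      else 0 := by
  obtain ⟨c, b⟩ := y
  have hneg :
      Ring.choose ((-1 - m1 : ℤ) : ℂ) i = (-1) ^ i * Ring.choose ((m1 + i : ℤ) : ℂ) i := by
    rw [show ((-1 - m1 : ℤ) : ℂ) = -((m1 : ℂ) + 1) by push_cast; ring,
      choose_neg_eq_neg_one_pow_mul, add_right_comm, add_sub_cancel_right, Int.cast_add,
      Int.cast_natCast]
  simp only [termCfun, cchoose_eq_choose, mem_product, mem_range]
  split_ifs with h1 h2 h2
  · rw [show (m2 - (-1 - (m1 + i) + r - j + s - c + b)).toNat = t - b by omega, hneg]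
    ring
  · exact absurd ⟨by omega, by omega, by omega⟩ h2
  · rw [Nat.choose_eq_zero_of_lt (by omega), Nat.cast_zero, zero_mul, mul_zero]
  · rfl

theorem termC_eq (ht : m0 + m1 + m2 + 1 - r - s - k = t) :
    termC r s k p m0 m1 m2 =
      ∑ b ∈ range (t + 1),
        (if 0 ≤ m0 - k then Ring.choose ((m2 - s - b + (m0 - k) : ℤ) : ℂ) (m0 - k).toNat
          else 0) * p (t - b) b := by
  rw [termC, tsum_eq_sum_sum_antidiagonal_of_eq_ite (termCfun_eq_ite p ht),
    sum_product_right]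
  refine sum_congr rfl fun b hb => ?_
  split_ifs with hN
  · obtain ⟨N, hN⟩ := Int.eq_ofNat_of_zero_le hN
    have hinner : ∀ c ∈ range (N + 1),
        (if 0 ≤ (N : ℤ) - c then
          ∑ ij ∈ antidiagonal ((N : ℤ) - c).toNat, Ring.choose ((-1 - m1 : ℤ) : ℂ) ij.1
            * Ring.choose (r : ℂ) ij.2 * ((t - b).choose c * p (t - b) b) else 0) =
          Ring.choose ((t - b : ℕ) : ℂ) c * Ring.choose ((-1 - m1 + r : ℤ) : ℂ) (N - c)
            * p (t - b) b := by
      intro c hc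
      rw [mem_range] at hc
      rw [if_pos (by omega), show ((N : ℤ) - c).toNat = N - c by omega, ← sum_mul,
        ← Ring.add_choose_eq _ (Commute.all _ _), Ring.choose_natCast]
      push_cast
      ring
    dsimp only
    rw [hN, Int.toNat_natCast, sum_congr rfl hinner, ← sum_mul, sum_range_choose_mul_choose]
    rw [mem_range] at hb
    have ht' : ((m0 + m1 + m2 + 1 - r - s - k : ℤ) : ℂ) = t := by exact_mod_cast ht
    have hN' : ((m0 - k : ℤ) : ℂ) = N := by exact_mod_cast hN
    congr 2
    push_cast [Nat.cast_sub (Nat.lt_succ_iff.mp hb)] at ht' hN' ⊢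
    linear_combination hN' - ht'
  · rw [zero_mul]
    exact sum_eq_zero fun c _ => if_neg (by omega)

end Terms

/-- For all integers `r, s, k` and every formal power series
`p(z1,z2) ∈ ℂ[[z1,z2]]` (given by its coefficient function `p : ℕ → ℕ → ℂ`), all three
terms of the fundamental delta-function identity are well-defined formal series (each
coefficient is a finite sum), and, coefficientwise,
`z0⁻¹δ((z1−z2)/z0)·z1^r z2^s (z1−z2)^k p(z1,z2)
 − z0⁻¹δ((z2−z1)/(−z0))·z1^r z2^s (−z2+z1)^k p(z1,z2)
 = z2⁻¹δ((z1−z0)/z2)·(z2+z0)^r z2^s z0^k p(z2+z0,z2)`. -/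
theorem delta_function_identity (r s k : ℤ) (p : ℕ → ℕ → ℂ) (m0 m1 m2 : ℤ) :
    (Function.support (termAfun r s k p m0 m1 m2)).Finite ∧
    (Function.support (termBfun r s k p m0 m1 m2)).Finite ∧
    (Function.support (termCfun r s k p m0 m1 m2)).Finite ∧
    termA r s k p m0 m1 m2 - termB r s k p m0 m1 m2 = termC r s k p m0 m1 m2 := by
  rcases lt_or_ge (m0 + m1 + m2 + 1 - r - s - k) 0 with hT | hT
  · have hA : termAfun r s k p m0 m1 m2 = 0 := funext fun ⟨i, j, b⟩ => if_neg (by omega)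
    have hB : termBfun r s k p m0 m1 m2 = 0 := funext fun ⟨i, j, a⟩ => if_neg (by omega)
    have hC : termCfun r s k p m0 m1 m2 = 0 := funext fun ⟨i, j, c, b⟩ => if_neg (by omega)
    simp [termA, termB, termC, hA, hB, hC]
  obtain ⟨t, ht⟩ := Int.eq_ofNat_of_zero_le hT
  refine ⟨support_finite_of_eq_ite (termAfun_eq_ite p ht),
    support_finite_of_eq_ite (termBfun_eq_ite p ht),
    support_finite_of_eq_ite (termCfun_eq_ite p ht), ?_⟩
  rw [termB_eq p ht, ← sum_range_reflect, termA_eq p ht, termC_eq p ht, ← sum_sub_distrib]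
  refine sum_congr rfl fun b hb => ?_
  rw [mem_range] at hb
  have key := subPowCoeff_sub_neg_one_zpow_mul_subPowCoeff (m0 - k) (m2 - s - b)
  rw [show -(m0 - k) - 1 = k - m0 - 1 by ring,
    show k - m0 - 1 - (m2 - s - b) = m1 - r - ((t - b : ℕ) : ℤ) by omega] at key
  rw [add_tsub_cancel_right, Nat.sub_sub_self (by omega), ← key]
  ring
end

section
/- Let G be a finite abelian group and let b : G × G → ℂ/2ℤ be a symmetric ℤ-bilinear form (i.e., b is additive in each variable and b(x,y) = b(y,x) for all x, y ∈ G), which may be degenerate. Then there exist a finite abelian group G̃, an injective group homomorphism ι : G → G̃, and a symmetric ℤ-bilinear form b̃ : G̃ × G̃ → ℂ/2ℤ such that b̃(ι(x), ι(y)) = b(x, y) for all x, y ∈ G and such that b̃ is nondegenerate: if g ∈ G̃ satisfies b̃(g, g') = 0 for all g' ∈ G̃, then g = 0. -/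
/-- `ℂ/2ℤ`: the quotient of the additive group of complex numbers by the subgroup of
even integers. -/
abbrev CMod2Z := ℂ ⧸ AddSubgroup.zmultiples (2 : ℂ)

/-- A nondegenerate extension of a symmetric `ℂ/2ℤ`-valued ℤ-bilinear form `b` on a
finite abelian group `G`: a finite abelian group `G̃` together with an injective group
homomorphism `ι : G → G̃` and a symmetric ℤ-bilinear form `b̃` on `G̃` extending `b`
through `ι` and nondegenerate. -/
structure NondegFiniteExtension (G : Type) [AddCommGroup G] (b : G → G → CMod2Z) where
  carrier : Type
  [addCommGroup : AddCommGroup carrier]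
  [fintype : Fintype carrier]
  emb : G → carrier
  emb_add : ∀ x y : G, emb (x + y) = emb x + emb y
  emb_inj : Function.Injective emb
  form : carrier → carrier → CMod2Z
  form_add_left : ∀ x y z : carrier, form (x + y) z = form x z + form y z
  form_add_right : ∀ x y z : carrier, form x (y + z) = form x y + form x z
  form_symm : ∀ x y : carrier, form x y = form y x
  form_compat : ∀ x y : G, form (emb x) (emb y) = b x y
  form_nondeg : ∀ g : carrier, (∀ g' : carrier, form g g' = 0) → g = 0

/-!
Embed `G` into `G × Ĝ`, where `Ĝ = Hom(G, ℚ/ℤ)` is finite, and add to `b` the hyperbolic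
pairing `((x, φ), (y, ψ)) ↦ φ y + ψ x`, read in `ℂ/2ℤ` through the injection
`ℚ/ℤ → ℂ/2ℤ`, `q ↦ 2q`. Pairing `(x, φ)` against `(0, ψ)` for all `ψ` forces `x = 0`
because characters separate points, and then pairing against `(y, 0)` forces `φ = 0`.
-/

namespace QuotientAddGroup

theorem map_zmultiples_injective {A B : Type*} [AddCommGroup A] [AddCommGroup B]
    {f : A →+ B} (hf : Function.Injective f) {a : A} {b : B} (hab : f a = b)
    (h : AddSubgroup.zmultiples a ≤ (AddSubgroup.zmultiples b).comap f) :
    Function.Injective (map _ _ f h) := by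
  rw [← AddMonoidHom.ker_eq_bot_iff, ker_map, ← hab, ← AddMonoidHom.map_zmultiples,
    AddSubgroup.comap_map_eq_self_of_injective hf, eq_bot_iff]
  rintro _ ⟨x, hx, rfl⟩
  exact (eq_zero_iff x).mpr hx

end QuotientAddGroup

theorem CharacterModule.finite (A : Type*) [AddCommGroup A] [Finite A] :
    Finite (CharacterModule A) := by
  have := (AddCircle.finite_torsion (1 : ℚ) (Nat.card_pos (α := A))).to_subtype
  refine Finite.of_injective (fun (c : CharacterModule A) (a : A) =>
    (⟨c a, by simp [← map_nsmul, card_nsmul_eq_zero']⟩ :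
      {u : AddCircle (1 : ℚ) | Nat.card A • u = 0})) fun c c' h => ?_
  ext a
  exact congr_arg Subtype.val (congr_fun h a)

noncomputable def ratCircleToCMod2Z : AddCircle (1 : ℚ) →+ CMod2Z :=
  QuotientAddGroup.map _ _ ((AddMonoidHom.mulLeft (2 : ℂ)).comp (Rat.castHom ℂ))
    (by simp [AddSubgroup.zmultiples_le])

theorem ratCircleToCMod2Z_injective : Function.Injective ratCircleToCMod2Z :=
  QuotientAddGroup.map_zmultiples_injective
    ((mul_right_injective₀ two_ne_zero).comp (Rat.cast_injective (α := ℂ))) (by simp) _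

section HyperbolicExtension

variable {G D M : Type*} [AddCommGroup G] [AddCommGroup D] [AddCommGroup M]

def hyperbolicExtension (b : G → G → M) (e : D →+ G →+ M) (p q : G × D) : M :=
  b p.1 q.1 + e p.2 q.1 + e q.2 p.1

variable {b : G → G → M} (e : D →+ G →+ M)

theorem hyperbolicExtension_add_left (hb : ∀ x y z, b (x + y) z = b x z + b y z)
    (p p' q : G × D) :
    hyperbolicExtension b e (p + p') q =
      hyperbolicExtension b e p q + hyperbolicExtension b e p' q := by
  simp only [hyperbolicExtension, Prod.fst_add, Prod.snd_add, hb, map_add,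
    AddMonoidHom.add_apply]
  abel

theorem hyperbolicExtension_add_right (hb : ∀ x y z, b x (y + z) = b x y + b x z)
    (p q q' : G × D) :
    hyperbolicExtension b e p (q + q') =
      hyperbolicExtension b e p q + hyperbolicExtension b e p q' := by
  simp only [hyperbolicExtension, Prod.fst_add, Prod.snd_add, hb, map_add,
    AddMonoidHom.add_apply]
  abel

theorem hyperbolicExtension_comm (hb : ∀ x y, b x y = b y x) (p q : G × D) :
    hyperbolicExtension b e p q = hyperbolicExtension b e q p := by
  simp only [hyperbolicExtension, hb p.1]
  abel

theorem hyperbolicExtension_inl (x y : G) :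
    hyperbolicExtension b e (x, 0) (y, 0) = b x y := by
  simp [hyperbolicExtension]

theorem eq_zero_of_forall_hyperbolicExtension_eq_zero
    (hb_left : ∀ x y z, b (x + y) z = b x z + b y z)
    (hb_right : ∀ x y z, b x (y + z) = b x y + b x z)
    (he_left : ∀ d, (∀ x, e d x = 0) → d = 0) (he_right : ∀ x, (∀ d, e d x = 0) → x = 0)
    (p : G × D) (hp : ∀ q, hyperbolicExtension b e p q = 0) : p = 0 := by
  obtain ⟨x, d⟩ := p
  have hx : x = 0 := he_right x fun d' => by
    have hb0 : b x 0 = 0 := (AddMonoidHom.mk' (b x) (hb_right x)).map_zero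
    simpa [hyperbolicExtension, hb0] using hp (0, d')
  subst hx
  have hd : d = 0 := he_left d fun y => by
    have hb0 : b 0 y = 0 := (AddMonoidHom.mk' (b · y) (hb_left · · y)).map_zero
    simpa [hyperbolicExtension, hb0] using hp (y, 0)
  simp [hd]

end HyperbolicExtension

section CharacterPairing

variable (G : Type*) [AddCommGroup G]

noncomputable def characterPairing : CharacterModule G →+ G →+ CMod2Z :=
  AddMonoidHom.compHom ratCircleToCMod2Z

variable {G}

theorem characterPairing_apply (c : CharacterModule G) (x : G) :
    characterPairing G c x = ratCircleToCMod2Z (c x) :=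
  rfl

theorem eq_zero_of_forall_characterPairing_eq_zero_left (c : CharacterModule G)
    (hc : ∀ x, characterPairing G c x = 0) : c = 0 := by
  ext x
  exact ratCircleToCMod2Z_injective <| by
    rw [← characterPairing_apply, hc, ← characterPairing_apply, map_zero,
      AddMonoidHom.zero_apply]

theorem eq_zero_of_forall_characterPairing_eq_zero_right (x : G)
    (hx : ∀ c, characterPairing G c x = 0) : x = 0 :=
  CharacterModule.eq_zero_of_character_apply fun c => ratCircleToCMod2Z_injective <| by
    rw [← characterPairing_apply, hx, map_zero]

end CharacterPairing

/-- Every symmetric `ℂ/2ℤ`-valued ℤ-bilinear form (possibly degenerate) on a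
finite abelian group extends, through an injective homomorphism into a finite abelian
group, to a nondegenerate symmetric `ℂ/2ℤ`-valued ℤ-bilinear form. -/
theorem exists_nondegenerate_extension (G : Type) [AddCommGroup G] [Fintype G]
    (b : G → G → CMod2Z)
    (hadd_left : ∀ x y z : G, b (x + y) z = b x z + b y z)
    (hadd_right : ∀ x y z : G, b x (y + z) = b x y + b x z)
    (hsymm : ∀ x y : G, b x y = b y x) :
    Nonempty (NondegFiniteExtension G b) :=
  have := CharacterModule.finite G
  ⟨{ carrier := G × CharacterModule G
     fintype := Fintype.ofFinite _
     emb := AddMonoidHom.inl _ _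
     emb_add := map_add _
     emb_inj := fun _ _ h => congr_arg Prod.fst h
     form := hyperbolicExtension b (characterPairing G)
     form_add_left := hyperbolicExtension_add_left _ hadd_left
     form_add_right := hyperbolicExtension_add_right _ hadd_right
     form_symm := hyperbolicExtension_comm _ hsymm
     form_compat := hyperbolicExtension_inl _
     form_nondeg := eq_zero_of_forall_hyperbolicExtension_eq_zero _ hadd_left hadd_right
       eq_zero_of_forall_characterPairing_eq_zero_left
       eq_zero_of_forall_characterPairing_eq_zero_right }⟩
end

section
/- Let L be a free abelian group of finite rank equipped with a nondegenerate symmetric ℤ-bilinear form ⟨·,·⟩ : L × L → ℚ, and let ℓ be a complex number that is not rational. Let S be a set with an action of the additive group L (written (g, s) ↦ g + s), equipped with a function (·,·) : L × S → ℂ/ℤ satisfying (g1 + g2, g3 + s) = (⟨g1, g3⟩/ℓ + ℤ) + (⟨g2, g3⟩/ℓ + ℤ) + (g1, s) + (g2, s) in ℂ/ℤ for all g1, g2, g3 ∈ L and s ∈ S. Then the action of L on S is free: for g1, g2 ∈ L and s ∈ S, if g1 + s = g2 + s, then g1 = g2. -/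
/-!
If `h` fixes `s`, comparing the relation at `(g, 0, h, s)` with the one at `(0, 0, 0, s)` shows
`⟨g, h⟩/ℓ ∈ ℤ` for every `g`. An integer multiple of the irrational `ℓ` is rational only when the
multiple is zero, so `⟨g, h⟩ = 0` for all `g`, and nondegeneracy forces `h = 0`.
-/

theorem eq_zero_of_vadd_eq_self_of_map_add_vadd {G S Q : Type*} [AddMonoid G] [AddAction G S]
    [AddCancelCommMonoid Q] (φ : G → G → Q) (hφ : ∀ z, φ 0 z = 0) (f : G → S → Q)
    (hf : ∀ g1 g2 g3 s, f (g1 + g2) (g3 +ᵥ s) = φ g1 g3 + φ g2 g3 + f g1 s + f g2 s)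
    {h : G} {s : S} (hs : h +ᵥ s = s) (g : G) : φ g h = 0 := by
  have hf0 : f 0 s = 0 := by
    have := hf 0 0 0 s
    rw [add_zero, zero_vadd, hφ, zero_add, zero_add] at this
    exact add_eq_right.mp this.symm
  have := hf g 0 h s
  rw [add_zero, hs, hφ, hf0, add_zero, add_zero] at this
  exact add_eq_right.mp this.symm

theorem Complex.rat_eq_zero_of_mk_div_eq_zero {ℓ : ℂ} (hℓ : ¬ ∃ q : ℚ, ℓ = q) {q : ℚ}
    (h : (QuotientAddGroup.mk ((q : ℂ) / ℓ) : ℂ ⧸ AddSubgroup.zmultiples (1 : ℂ)) = 0) :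
    q = 0 := by
  obtain ⟨n, hn⟩ := AddSubgroup.mem_zmultiples_iff.mp ((QuotientAddGroup.eq_zero_iff _).mp h)
  rw [zsmul_eq_mul, mul_one] at hn
  have hℓ0 : ℓ ≠ 0 := by
    rintro rfl
    exact hℓ ⟨0, by simp⟩
  by_contra hq
  have hn0 : (n : ℂ) ≠ 0 := by
    rw [hn]
    exact div_ne_zero (by exact_mod_cast hq) hℓ0
  refine hℓ ⟨q / n, ?_⟩
  push_cast
  rw [hn]
  field_simp

theorem lset_action_free_general
    (L : Type) [AddCommGroup L]
    (B : L → L → ℚ)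
    (hBaddL : ∀ x y z : L, B (x + y) z = B x z + B y z)
    (hBnd : ∀ y : L, (∀ x : L, B x y = 0) → y = 0)
    (ℓ : ℂ) (hℓ : ¬ ∃ q : ℚ, ℓ = (q : ℂ))
    (S : Type) [AddAction L S]
    (f : L → S → ℂ ⧸ AddSubgroup.zmultiples (1 : ℂ))
    (hf : ∀ (g1 g2 g3 : L) (s : S),
      f (g1 + g2) (g3 +ᵥ s)
        = QuotientAddGroup.mk ((B g1 g3 : ℂ) / ℓ)
          + QuotientAddGroup.mk ((B g2 g3 : ℂ) / ℓ) + f g1 s + f g2 s) :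
    ∀ (g1 g2 : L) (s : S), g1 +ᵥ s = g2 +ᵥ s → g1 = g2 := by
  have hB0 : ∀ z, B 0 z = 0 := fun z ↦ by simpa using hBaddL 0 0 z
  have hfree : IsCancelVAdd L S := by
    refine isCancelVAdd_iff_eq_zero_of_vadd_eq.mpr fun h s hs ↦ hBnd h fun g ↦ ?_
    exact Complex.rat_eq_zero_of_mk_div_eq_zero hℓ <|
      eq_zero_of_vadd_eq_self_of_map_add_vadd (fun x y ↦ QuotientAddGroup.mk ((B x y : ℂ) / ℓ))
        (fun z ↦ by simp [hB0]) f hf hs g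
  exact IsCancelVAdd.right_cancel

/-- Let `L` be a free abelian group of finite rank with a nondegenerate
symmetric ℤ-bilinear form `B : L × L → ℚ`, and let `ℓ` be a complex number that is not
rational.  If `S` is an `L`-set equipped with a function `f : L × S → ℂ/ℤ` satisfying
`f(g1+g2, g3+s) = ⟨g1,g3⟩/ℓ + ⟨g2,g3⟩/ℓ + f(g1,s) + f(g2,s)` in `ℂ/ℤ`, then the action
of `L` on `S` is free. -/
theorem lset_action_free
    (L : Type) [AddCommGroup L] [Module.Free ℤ L] [Module.Finite ℤ L]
    (B : L → L → ℚ)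
    (hBaddL : ∀ x y z : L, B (x + y) z = B x z + B y z)
    (hBaddR : ∀ x y z : L, B x (y + z) = B x y + B x z)
    (hBsymm : ∀ x y : L, B x y = B y x)
    (hBnd : ∀ y : L, (∀ x : L, B x y = 0) → y = 0)
    (ℓ : ℂ) (hℓ : ¬ ∃ q : ℚ, ℓ = (q : ℂ))
    (S : Type) [AddAction L S]
    (f : L → S → ℂ ⧸ AddSubgroup.zmultiples (1 : ℂ))
    (hf : ∀ (g1 g2 g3 : L) (s : S),
      f (g1 + g2) (g3 +ᵥ s)
        = QuotientAddGroup.mk ((B g1 g3 : ℂ) / ℓ)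
          + QuotientAddGroup.mk ((B g2 g3 : ℂ) / ℓ) + f g1 s + f g2 s) :
    ∀ (g1 g2 : L) (s : S), g1 +ᵥ s = g2 +ᵥ s → g1 = g2 :=
  lset_action_free_general L B hBaddL hBnd ℓ hℓ S f hf
end

section
/- Let h be a d-dimensional complex vector space with a nondegenerate symmetric ℂ-bilinear form ⟨·,·⟩, let ℓ be a nonzero rational number, and let K be the additive subgroup of h generated by a ℤ-basis {α_1, …, α_d} that is also a ℂ-basis of h (so K is a full-rank lattice spanning h over ℂ); assume ℓ⟨α, β⟩ ∈ ℤ for all α, β ∈ K. Define the dual K^o = { x ∈ h : ⟨α, x⟩ ∈ ℤ for all α ∈ K }. Then the kernel of the ℂ/2ℤ-valued ℤ-bilinear form on K^o defined by (x, y) = ⟨x, y⟩/ℓ + 2ℤ equals 2ℓK; that is, for x ∈ K^o one has (⟨x, y⟩/ℓ ∈ 2ℤ for all y ∈ K^o) if and only if x = 2ℓα for some α ∈ K. -/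
/-!
The dual lattice of `K = ℤα₁ + ⋯ + ℤα_d` is spanned over `ℤ` by the basis `β` with
`⟨αᵢ, βⱼ⟩ = δᵢⱼ`, and the `α`-coordinates of any `x` are the pairings `⟨x, βⱼ⟩`. So `x` pairs into
`cℤ` with the whole dual lattice exactly when all its coordinates lie in `cℤ`, i.e. `x ∈ cK`;
take `c = 2ℓ`.
-/

open Module Submodule
open LinearMap (BilinForm)

namespace LinearMap.BilinForm

variable {R S M ι : Type*} [CommRing R] [Field S] [AddCommGroup M]
  [Algebra R S] [Module R M] [Module S M] [IsScalarTower R S M] [Finite ι]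

theorem forall_flip_dualSubmodule_apply_eq_mul_iff {B : BilinForm S M} (hB : B.Nondegenerate)
    (b : Basis ι S M) (c : S) (x : M) :
    (∀ y ∈ B.flip.dualSubmodule (span R (Set.range b)), ∃ m : R, B x y = c * algebraMap R S m)
      ↔ ∃ a ∈ span R (Set.range b), x = c • a := by
  classical
  have := Fintype.ofFinite ι
  constructor
  · intro hx
    set β := B.flip.dualBasis hB.flip b
    have hβ : ∀ i, β i ∈ B.flip.dualSubmodule (span R (Set.range b)) := fun i => by
      rw [dualSubmodule_span_of_basis _ hB.flip]
      exact subset_span ⟨i, rfl⟩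
    choose m hm using fun i => hx (β i) (hβ i)
    refine ⟨∑ i, m i • b i, sum_mem fun i _ => smul_mem _ _ (subset_span ⟨i, rfl⟩), ?_⟩
    have hrepr : ∀ i, b.repr x i = B x (β i) := fun i => by
      conv_lhs => rw [← dualBasis_dualBasis_flip hB b]
      exact dualBasis_repr_apply hB β x i
    calc x = ∑ i, b.repr x i • b i := (b.sum_repr x).symm
      _ = c • ∑ i, m i • b i := by
        simp only [hrepr, hm, Finset.smul_sum, smul_smul, ← algebraMap_smul S (m _)]
  · rintro ⟨a, ha, rfl⟩ y hy
    obtain ⟨m, hm⟩ := mem_one.mp (hy a ha)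
    exact ⟨m, by rw [map_smul, smul_apply, smul_eq_mul, hm, flip_apply]⟩

end LinearMap.BilinForm

open LinearMap.BilinForm in
theorem kernel_of_dual_form_eq_two_ell_K_general
    (d : ℕ) (h : Type) [AddCommGroup h] [Module ℂ h]
    (B : h → h → ℂ)
    (hBaddL : ∀ x y z : h, B (x + y) z = B x z + B y z)
    (hBsmulL : ∀ (c : ℂ) (x y : h), B (c • x) y = c * B x y)
    (hBaddR : ∀ x y z : h, B x (y + z) = B x y + B x z)
    (hBsmulR : ∀ (c : ℂ) (x y : h), B x (c • y) = c * B x y)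
    (hBnd : ∀ x : h, (∀ y : h, B x y = 0) → x = 0)
    (ℓ : ℚ) (hℓ : ℓ ≠ 0)
    (α : Fin d → h) (hbasis : ∃ b : Module.Basis (Fin d) ℂ h, ⇑b = α)
    (K : AddSubgroup h) (hK : K = AddSubgroup.closure (Set.range α))
    (Ko : Set h) (hKo : Ko = {x : h | ∀ a ∈ K, ∃ n : ℤ, B a x = (n : ℂ)}) :
    ∀ x ∈ Ko, ((∀ y ∈ Ko, ∃ m : ℤ, B x y / (ℓ : ℂ) = 2 * (m : ℂ))
      ↔ ∃ a ∈ K, x = ((2 * ℓ : ℚ) : ℂ) • a) := by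
  obtain ⟨b, rfl⟩ := hbasis
  have := b.finiteDimensional_of_finite
  let Bf : BilinForm ℂ h := LinearMap.mk₂ ℂ B hBaddL hBsmulL hBaddR hBsmulR
  have hK_span : ∀ a, a ∈ K ↔ a ∈ span ℤ (Set.range b) := fun a => by
    rw [hK, ← span_int_eq_addSubgroupClosure, mem_toAddSubgroup]
  have hKo_dual : ∀ y, y ∈ Ko ↔ y ∈ Bf.flip.dualSubmodule (span ℤ (Set.range b)) := fun y => by
    simp [hKo, mem_dualSubmodule, mem_one, hK_span, Bf, eq_comm]
  have hnd : Bf.Nondegenerate := .ofSeparatingLeft hBnd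
  have hℓC : (ℓ : ℂ) ≠ 0 := Rat.cast_ne_zero.mpr hℓ
  intro x _
  simp only [hK_span, hKo_dual, ← forall_flip_dualSubmodule_apply_eq_mul_iff hnd b]
  refine forall₂_congr fun y _ => exists_congr fun m => ?_
  rw [div_eq_iff hℓC, eq_intCast]
  simp [Bf, mul_right_comm]

/-- Let `h` be a `d`-dimensional complex vector space with a nondegenerate
symmetric ℂ-bilinear form `B = ⟨·,·⟩`, `ℓ` a nonzero rational number, and `K` the
additive subgroup of `h` generated by a ℤ-basis `α_1, …, α_d` which is also a ℂ-basis of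
`h`; assume `ℓ⟨α,β⟩ ∈ ℤ` for all `α, β ∈ K`.  With `K^o = {x : ⟨a,x⟩ ∈ ℤ for all a ∈ K}`,
the kernel of the `ℂ/2ℤ`-valued ℤ-bilinear form `(x,y) = ⟨x,y⟩/ℓ + 2ℤ` on `K^o` equals
`2ℓK`: for `x ∈ K^o`, `(⟨x,y⟩/ℓ ∈ 2ℤ for all y ∈ K^o)` iff `x = 2ℓa` for some `a ∈ K`. -/
theorem kernel_of_dual_form_eq_two_ell_K
    (d : ℕ) (h : Type) [AddCommGroup h] [Module ℂ h]
    (B : h → h → ℂ)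
    (hBaddL : ∀ x y z : h, B (x + y) z = B x z + B y z)
    (hBsmulL : ∀ (c : ℂ) (x y : h), B (c • x) y = c * B x y)
    (hBaddR : ∀ x y z : h, B x (y + z) = B x y + B x z)
    (hBsmulR : ∀ (c : ℂ) (x y : h), B x (c • y) = c * B x y)
    (hBsymm : ∀ x y : h, B x y = B y x)
    (hBnd : ∀ x : h, (∀ y : h, B x y = 0) → x = 0)
    (ℓ : ℚ) (hℓ : ℓ ≠ 0)
    (α : Fin d → h) (hbasis : ∃ b : Module.Basis (Fin d) ℂ h, ⇑b = α)
    (K : AddSubgroup h) (hK : K = AddSubgroup.closure (Set.range α))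
    (hInt : ∀ x ∈ K, ∀ y ∈ K, ∃ n : ℤ, (ℓ : ℂ) * B x y = (n : ℂ))
    (Ko : Set h) (hKo : Ko = {x : h | ∀ a ∈ K, ∃ n : ℤ, B a x = (n : ℂ)}) :
    ∀ x ∈ Ko, ((∀ y ∈ Ko, ∃ m : ℤ, B x y / (ℓ : ℂ) = 2 * (m : ℂ))
      ↔ ∃ a ∈ K, x = ((2 * ℓ : ℚ) : ℂ) • a) :=
  kernel_of_dual_form_eq_two_ell_K_general d h B hBaddL hBsmulL hBaddR hBsmulR hBnd ℓ hℓ α hbasis K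
    hK Ko hKo
end

section
/- Let h be a d-dimensional complex vector space with a nondegenerate symmetric ℂ-bilinear form ⟨·,·⟩, let ℓ be a nonzero rational number, and let K be the additive subgroup of h generated by a ℤ-basis {α_1, …, α_d} that is also a ℂ-basis of h (so K is a full-rank lattice spanning h over ℂ); assume ℓ⟨α, β⟩ ∈ ℤ for all α, β ∈ K. Define K^o = { x ∈ h : ⟨α, x⟩ ∈ ℤ for all α ∈ K }. Then 2ℓK ⊆ K^o, and on the quotient group G = K^o/2ℓK the assignment (x + 2ℓK, y + 2ℓK) ↦ ⟨x, y⟩/ℓ + 2ℤ is a well-defined symmetric ℤ-bilinear ℂ/2ℤ-valued form, and this form is nondegenerate: if g ∈ G pairs to 0 + 2ℤ with every element of G, then g = 0. -/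
/-!
Since `ℓ⟨K, K⟩ ⊆ ℤ`, the form `⟨x, y⟩/ℓ` takes values in `2ℤ` as soon as one argument lies
in `2ℓK` and the other in `K^o`, so it descends to `K^o/2ℓK`. If `x ∈ K^o` pairs into `2ℤ` with
all of `K^o`, then `x/(2ℓ)` lies in the dual of `K^o`, which for a nondegenerate form is `K` again
(the dual of the dual basis is the basis); hence `x ∈ 2ℓK`.
-/

open LinearMap (BilinForm)

namespace AddMonoidHom

variable {G M : Type*} [AddCommGroup G] [AddCommGroup M]

def liftQuotient₂ (N : AddSubgroup G) (f : G →+ G →+ M) (hl : ∀ n ∈ N, ∀ y, f n y = 0)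
    (hr : ∀ x, ∀ n ∈ N, f x n = 0) : G ⧸ N →+ G ⧸ N →+ M :=
  QuotientAddGroup.lift N (QuotientAddGroup.lift N f.flip fun n hn => ext fun x => hr x n hn).flip
    fun n hn => ext fun y => QuotientAddGroup.induction_on y fun y => hl n hn y

variable {N : AddSubgroup G} {f : G →+ G →+ M} {hl : ∀ n ∈ N, ∀ y, f n y = 0}
  {hr : ∀ x, ∀ n ∈ N, f x n = 0}

@[simp]
theorem liftQuotient₂_mk (x y : G) :
    liftQuotient₂ N f hl hr (QuotientAddGroup.mk x) (QuotientAddGroup.mk y) = f x y :=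
  rfl

theorem liftQuotient₂_comm (hf : ∀ x y, f x y = f y x) (g g' : G ⧸ N) :
    liftQuotient₂ N f hl hr g g' = liftQuotient₂ N f hl hr g' g := by
  induction g using QuotientAddGroup.induction_on
  induction g' using QuotientAddGroup.induction_on
  simp only [liftQuotient₂_mk, hf]

theorem eq_zero_of_forall_liftQuotient₂_eq_zero (hf : ∀ x, (∀ y, f x y = 0) → x ∈ N)
    {g : G ⧸ N} (hg : ∀ g', liftQuotient₂ N f hl hr g g' = 0) : g = 0 := by
  induction g using QuotientAddGroup.induction_on with | H x =>
  exact (QuotientAddGroup.eq_zero_iff x).2 (hf x fun y => hg (QuotientAddGroup.mk y))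

end AddMonoidHom

namespace QuotientAddGroup

theorem mk_eq_zero_iff_exists_eq_mul_intCast {S : Type*} [Ring S] {a z : S} :
    (mk z : S ⧸ AddSubgroup.zmultiples a) = 0 ↔ ∃ n : ℤ, z = a * n := by
  rw [eq_zero_iff, AddSubgroup.mem_zmultiples_iff]
  simp only [zsmul_eq_mul, Int.cast_comm, eq_comm]

theorem mk_div_eq_zero_iff {S : Type*} [Field S] {ℓ z : S} (hℓ : ℓ ≠ 0) :
    (mk (z / ℓ) : S ⧸ AddSubgroup.zmultiples (2 : S)) = 0 ↔ ∃ n : ℤ, z = 2 * ℓ * n := by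
  simp only [mk_eq_zero_iff_exists_eq_mul_intCast, div_eq_iff hℓ, mul_right_comm]

end QuotientAddGroup

namespace LinearMap.BilinForm

section DivModTwo

variable {S M : Type*} [Field S] [AddCommGroup M] [Module S M]

def divModTwo (B : BilinForm S M) (ℓ : S) (A : AddSubgroup M) :
    A →+ A →+ S ⧸ AddSubgroup.zmultiples (2 : S) :=
  AddMonoidHom.mk'
    (fun x => AddMonoidHom.mk' (fun y => QuotientAddGroup.mk (B x y / ℓ)) fun y y' => by
      simp [add_div])
    fun x x' => by ext y; simp [add_div]

end DivModTwo

variable {R S M ι : Type*} [CommRing R] [Field S] [AddCommGroup M] [Algebra R S] [Module R M]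
  [Module S M] [IsScalarTower R S M] [Finite ι]

theorem inv_smul_mem_span_of_forall_dualSubmodule_flip {B : BilinForm S M}
    (hB : B.Nondegenerate) (b : Module.Basis ι S M) {c : S} {x : M}
    (hx : ∀ y ∈ B.flip.dualSubmodule (Submodule.span R (Set.range b)),
      ∃ r : R, B x y = c * algebraMap R S r) :
    c⁻¹ • x ∈ Submodule.span R (Set.range b) := by
  rw [← dualSubmodule_dualSubmodule_flip_of_basis B hB b]
  intro y hy
  obtain ⟨r, hr⟩ := hx y hy
  by_cases hc : c = 0
  · simp [hc]
  · exact Submodule.mem_one.mpr ⟨r, by simp [hr, hc]⟩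

end LinearMap.BilinForm

/-- Let `h` be a `d`-dimensional complex vector space with a nondegenerate
symmetric ℂ-bilinear form `B = ⟨·,·⟩`, `ℓ` a nonzero rational number, and `K` the
additive subgroup of `h` generated by a ℤ-basis `α_1, …, α_d` which is also a ℂ-basis of
`h`; assume `ℓ⟨α,β⟩ ∈ ℤ` for all `α, β ∈ K`.  Let `K^o` be the dual subgroup
`{x : ⟨a,x⟩ ∈ ℤ for all a ∈ K}` and `T = 2ℓK`.  Then `T ⊆ K^o`, and on the quotient
group `G = K^o/2ℓK` the assignment `(x + 2ℓK, y + 2ℓK) ↦ ⟨x,y⟩/ℓ + 2ℤ` is a well-defined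
symmetric ℤ-bilinear `ℂ/2ℤ`-valued form which is nondegenerate. -/
theorem quotient_dual_form_nondegenerate
    (d : ℕ) (h : Type) [AddCommGroup h] [Module ℂ h]
    (B : h → h → ℂ)
    (hBaddL : ∀ x y z : h, B (x + y) z = B x z + B y z)
    (hBsmulL : ∀ (c : ℂ) (x y : h), B (c • x) y = c * B x y)
    (hBaddR : ∀ x y z : h, B x (y + z) = B x y + B x z)
    (hBsmulR : ∀ (c : ℂ) (x y : h), B x (c • y) = c * B x y)
    (hBsymm : ∀ x y : h, B x y = B y x)
    (hBnd : ∀ x : h, (∀ y : h, B x y = 0) → x = 0)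
    (ℓ : ℚ) (hℓ : ℓ ≠ 0)
    (α : Fin d → h) (hbasis : ∃ b : Module.Basis (Fin d) ℂ h, ⇑b = α)
    (K : AddSubgroup h) (hK : K = AddSubgroup.closure (Set.range α))
    (hInt : ∀ x ∈ K, ∀ y ∈ K, ∃ n : ℤ, (ℓ : ℂ) * B x y = (n : ℂ))
    (Ko : AddSubgroup h) (hKo : ∀ x : h, x ∈ Ko ↔ ∀ a ∈ K, ∃ n : ℤ, B a x = (n : ℂ))
    (T : AddSubgroup h) (hT : ∀ x : h, x ∈ T ↔ ∃ a ∈ K, x = ((2 * ℓ : ℚ) : ℂ) • a) :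
    T ≤ Ko ∧
    ∃ q : (Ko ⧸ T.addSubgroupOf Ko) → (Ko ⧸ T.addSubgroupOf Ko)
        → ℂ ⧸ AddSubgroup.zmultiples (2 : ℂ),
      (∀ x y : Ko, q (QuotientAddGroup.mk x) (QuotientAddGroup.mk y)
          = QuotientAddGroup.mk (B (x : h) (y : h) / (ℓ : ℂ))) ∧
      (∀ g1 g2 g3 : Ko ⧸ T.addSubgroupOf Ko, q (g1 + g2) g3 = q g1 g3 + q g2 g3) ∧
      (∀ g1 g2 g3 : Ko ⧸ T.addSubgroupOf Ko, q g1 (g2 + g3) = q g1 g2 + q g1 g3) ∧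
      (∀ g1 g2 : Ko ⧸ T.addSubgroupOf Ko, q g1 g2 = q g2 g1) ∧
      (∀ g1 : Ko ⧸ T.addSubgroupOf Ko, (∀ g2, q g1 g2 = 0) → g1 = 0) := by
  obtain ⟨b, rfl⟩ := hbasis
  let Bl : BilinForm ℂ h := LinearMap.mk₂ ℂ B hBaddL hBsmulL hBaddR hBsmulR
  have hnd : Bl.Nondegenerate := ⟨hBnd, fun y hy => hBnd y fun x => hBsymm y x ▸ hy x⟩
  have hsymm : ∀ x y, Bl x y = Bl y x := hBsymm
  have hℓC : (ℓ : ℂ) ≠ 0 := by exact_mod_cast hℓ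
  push_cast at hT
  set L := Submodule.span ℤ (Set.range b)
  have hKL : ∀ x, x ∈ K ↔ x ∈ L := by
    simp [hK, L, ← Submodule.span_int_eq_addSubgroupClosure]
  have hKoL : ∀ y, y ∈ Ko ↔ y ∈ Bl.flip.dualSubmodule L := by
    simp [hKo, hKL, Submodule.mem_one, Bl, eq_comm, LinearMap.BilinForm.mem_dualSubmodule]
  have hTpair : ∀ t ∈ T, ∀ y ∈ Ko, ∃ n : ℤ, Bl t y = 2 * ℓ * n := by
    intro t ht y hy
    obtain ⟨a, ha, rfl⟩ := (hT t).1 ht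
    obtain ⟨n, hn⟩ := (hKo y).1 hy a ha
    exact ⟨n, by rw [LinearMap.BilinForm.smul_left]; exact congrArg _ hn⟩
  have hTKo : T ≤ Ko := by
    intro t ht
    obtain ⟨a, ha, rfl⟩ := (hT t).1 ht
    refine (hKo _).2 fun c hc => ?_
    obtain ⟨n, hn⟩ := hInt c hc a ha
    exact ⟨2 * n, by rw [hBsmulR]; push_cast [← hn]; ring⟩
  let q := AddMonoidHom.liftQuotient₂ (T.addSubgroupOf Ko) (Bl.divModTwo ℓ Ko)
    (fun t ht y => (QuotientAddGroup.mk_div_eq_zero_iff hℓC).2 (hTpair t ht y y.2))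
    (fun x t ht => (QuotientAddGroup.mk_div_eq_zero_iff hℓC).2 (hsymm t x ▸ hTpair t ht x x.2))
  refine ⟨hTKo, fun g1 g2 => q g1 g2, fun _ _ => rfl,
    fun g1 g2 g3 => DFunLike.congr_fun (map_add q g1 g2) g3, fun g1 => map_add (q g1), ?_, ?_⟩
  · exact AddMonoidHom.liftQuotient₂_comm fun x y => congrArg QuotientAddGroup.mk (by rw [hsymm])
  · refine fun g hg => AddMonoidHom.eq_zero_of_forall_liftQuotient₂_eq_zero (fun x hx => ?_) hg
    have hxL : (2 * (ℓ : ℂ))⁻¹ • (x : h) ∈ L := by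
      refine Bl.inv_smul_mem_span_of_forall_dualSubmodule_flip hnd b fun y hy => ?_
      have hpair := hx ⟨y, (hKoL y).2 hy⟩
      obtain ⟨n, hn⟩ := (QuotientAddGroup.mk_div_eq_zero_iff hℓC).1 hpair
      exact ⟨n, by simpa [Bl] using hn⟩
    exact (hT x).2 ⟨_, (hKL _).2 hxL, (smul_inv_smul₀ (mul_ne_zero two_ne_zero hℓC) _).symm⟩
end
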